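/- A positive semidefinite binary form f ∈ ℝ[x,y] of even degree is a sum of two squares of real binary forms. -/

import Mathlib

/-!
Dehomogenize: `F(x) = f(x, 1)` is a nonnegative real polynomial of degree at most `2d`. Any
complex root `z` of `F` yields a nonnegative quadratic factor `(x - Re z)² + (Im z)²` of `F`
(when `z` is real it is a double root, since it is a minimum of `F`); the quotient is again
nonnegative, so by induction it is a sum of two squares, and the product of two sums of two
squares is one. Homogenizing the two squares in degree `d` gives back `f`, since a form of
degree `2d` is determined by its dehomogenization.
-/

open Polynomial

namespace Polynomial

theorem sq_X_sub_C_dvd_of_isRoot_of_nonneg {f : ℝ[X]} (hf : ∀ x, 0 ≤ f.eval x) {a : ℝ}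
    (ha : f.IsRoot a) : (X - C a) ^ 2 ∣ f := by
  rcases eq_or_ne f 0 with rfl | hf0
  · exact dvd_zero _
  have hmin : IsLocalMin (fun x ↦ f.eval x) a :=
    .of_forall fun x ↦ by simpa [ha.eq_zero] using hf x
  have hderiv : f.derivative.IsRoot a := by simpa using hmin.deriv_eq_zero
  have hmult : 1 < f.rootMultiplicity a :=
    (one_lt_rootMultiplicity_iff_isRoot hf0).mpr ⟨ha, hderiv⟩
  exact (pow_dvd_pow _ hmult).trans (pow_rootMultiplicity_dvd f a)

theorem map_sub_re_sq_add_im_sq (z : ℂ) :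
    ((X - C z.re) ^ 2 + C z.im ^ 2 : ℝ[X]).map (algebraMap ℝ ℂ) =
      (X - C z) * (X - C (starRingEnd ℂ z)) := by
  have hI : (C Complex.I : ℂ[X]) ^ 2 = -1 := by rw [← C_pow, Complex.I_sq, C_neg, C_1]
  conv_rhs => rw [← Complex.re_add_im z]
  simp only [Polynomial.map_add, Polynomial.map_pow, Polynomial.map_sub, map_X, map_C,
    Complex.coe_algebraMap, map_add, map_mul, Complex.conj_ofReal, Complex.conj_I, C_neg]
  linear_combination (C (z.im : ℂ)) ^ 2 * hI

theorem sub_re_sq_add_im_sq_dvd_of_nonneg {f : ℝ[X]} (hf : ∀ x, 0 ≤ f.eval x) {z : ℂ}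
    (hz : aeval z f = 0) : (X - C z.re) ^ 2 + C z.im ^ 2 ∣ f := by
  rcases eq_or_ne z.im 0 with him | him
  · have hre : f.IsRoot z.re := by
      have hz_re : z = algebraMap ℝ ℂ z.re := Complex.ext (by simp) (by simp [him])
      rwa [hz_re, aeval_algebraMap_apply, FaithfulSMul.algebraMap_eq_zero_iff] at hz
    simpa [him] using sq_X_sub_C_dvd_of_isRoot_of_nonneg hf hre
  · have hconj : aeval (starRingEnd ℂ z) f = 0 := by rw [aeval_conj, hz, map_zero]
    have hne : z - starRingEnd ℂ z ≠ 0 :=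
      sub_ne_zero.mpr fun h ↦ him (Complex.conj_eq_iff_im.mp h.symm)
    rw [← map_dvd_map' (algebraMap ℝ ℂ), map_sub_re_sq_add_im_sq]
    exact (isCoprime_X_sub_C_of_isUnit_sub hne.isUnit).mul_dvd
      (by rwa [dvd_iff_isRoot, IsRoot, eval_map_algebraMap])
      (by rwa [dvd_iff_isRoot, IsRoot, eval_map_algebraMap])

theorem eval_nonneg_of_mul_nonneg {s g : ℝ[X]} (hs0 : s ≠ 0) (hs : ∀ x, 0 ≤ s.eval x)
    (hsg : ∀ x, 0 ≤ (s * g).eval x) (x : ℝ) : 0 ≤ g.eval x := by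
  refine (s.roots.toFinset.finite_toSet.countable.dense_compl ℝ).induction (fun y hy ↦ ?_)
    (isClosed_le continuous_const g.continuous) x
  have hsy : s.eval y ≠ 0 := by simpa [mem_roots hs0] using hy
  exact nonneg_of_mul_nonneg_right (by simpa using hsg y) ((hs y).lt_of_ne' hsy)

theorem exists_sq_add_sq_of_nonneg {n : ℕ} {f : ℝ[X]} (hdeg : f.natDegree ≤ 2 * n)
    (hf : ∀ x, 0 ≤ f.eval x) :
    ∃ a b : ℝ[X], a.natDegree ≤ n ∧ b.natDegree ≤ n ∧ f = a ^ 2 + b ^ 2 := by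
  induction n generalizing f with
  | zero =>
    have hc : f = C (f.eval 0) := by
      rw [← coeff_zero_eq_eval_zero]; exact eq_C_of_natDegree_eq_zero (by omega)
    refine ⟨C √(f.eval 0), 0, by simp, by simp, ?_⟩
    rw [← C_pow, Real.sq_sqrt (hf 0), zero_pow two_ne_zero, add_zero, ← hc]
  | succ n ih =>
    rcases eq_or_ne f.natDegree 0 with hc | hc
    · obtain ⟨a, b, ha, hb, hab⟩ := ih (by omega) hf
      exact ⟨a, b, by omega, by omega, hab⟩
    obtain ⟨z, hz⟩ := Complex.exists_root (f := f.map (algebraMap ℝ ℂ))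
      (by rw [degree_map]; exact natDegree_pos_iff_degree_pos.mp (by omega))
    rw [IsRoot.def, eval_map_algebraMap] at hz
    obtain ⟨g, rfl⟩ := sub_re_sq_add_im_sq_dvd_of_nonneg hf hz
    set s : ℝ[X] := (X - C z.re) ^ 2 + C z.im ^ 2
    have hs : s.natDegree = 2 := by simp only [s]; compute_degree!
    have hs0 : s ≠ 0 := by rintro h; simp [h] at hs
    have hg0 : g ≠ 0 := by rintro rfl; simp at hc
    have hgdeg : g.natDegree ≤ 2 * n := by
      rw [natDegree_mul hs0 hg0, hs] at hdeg; omega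
    have hgnn : ∀ x, 0 ≤ g.eval x := by
      refine eval_nonneg_of_mul_nonneg hs0 (fun x ↦ ?_) hf
      simp only [s, eval_add, eval_pow, eval_sub, eval_X, eval_C]
      positivity
    obtain ⟨a, b, ha, hb, rfl⟩ := ih hgdeg hgnn
    have hdeg_step {p q : ℝ[X]} (hp : p.natDegree ≤ n) (hq : q.natDegree ≤ n) (c : ℝ) :
        ((X - C z.re) * p + C c * q).natDegree ≤ n + 1 :=
      natDegree_add_le_of_degree_le
        ((natDegree_mul_le_of_le (natDegree_X_sub_C_le _) hp).trans (by omega))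
        ((natDegree_C_mul_le _ _).trans (by omega))
    refine ⟨(X - C z.re) * a + C (-z.im) * b, (X - C z.re) * b + C z.im * a,
      hdeg_step ha hb _, hdeg_step hb ha _, by rw [C_neg]; ring⟩

end Polynomial

namespace MvPolynomial

variable {R : Type*} [CommRing R]

theorem eval_aeval_X_one (f : MvPolynomial (Fin 2) R) (x : R) :
    (aeval ![Polynomial.X, 1] f).eval x = eval ![x, 1] f := by
  rw [← Polynomial.coe_aeval_eq_eval, comp_aeval_apply]
  exact congrArg (aeval · f) (by ext i; fin_cases i <;> simp)

theorem natDegree_aeval_X_one_le [Nontrivial R] {f : MvPolynomial (Fin 2) R} {n : ℕ}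
    (hf : f.IsHomogeneous n) : (aeval ![(Polynomial.X : R[X]), 1] f).natDegree ≤ n :=
  aeval_natDegree_le (n := 1) f hf.totalDegree_le _ (fun i ↦ by fin_cases i <;> simp)
    |>.trans (by simp)

end MvPolynomial

open MvPolynomial

theorem stmt_6 (d : ℕ) (f : MvPolynomial (Fin 2) ℝ)
    (hf : f.IsHomogeneous (2 * d)) (hfpsd : ∀ v : Fin 2 → ℝ, 0 ≤ eval v f) :
    ∃ p q : MvPolynomial (Fin 2) ℝ, p.IsHomogeneous d ∧ q.IsHomogeneous d ∧
      f = p ^ 2 + q ^ 2 := by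
  obtain ⟨a, b, ha, hb, hab⟩ := exists_sq_add_sq_of_nonneg (natDegree_aeval_X_one_le hf)
    fun x ↦ (eval_aeval_X_one f x).symm ▸ hfpsd ![x, 1]
  have hsq : (a.homogenize d ^ 2 + b.homogenize d ^ 2).IsHomogeneous (2 * d) := by
    rw [mul_comm]
    exact ((isHomogeneous_homogenize a).pow 2).add ((isHomogeneous_homogenize b).pow 2)
  refine ⟨a.homogenize d, b.homogenize d, isHomogeneous_homogenize a,
    isHomogeneous_homogenize b, ?_⟩
  rw [← homogenize_eq_of_isHomogeneous hf rfl, homogenize_eq_of_isHomogeneous hsq]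
  simpa [ha, hb] using hab.symm
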